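/- Let q ∈ (0,1], let n be a nonnegative integer, let real coefficients b^n_{ijk} be given for all nonnegative i, j, k with i + j + k = n, and let γ^n(u,v) = Σ_{i+j+k=n} b^n_{ijk} B^n_{ijk}(u,v). Define recursively, for 0 ≤ r ≤ n and all nonnegative i, j, k with i + j + k = n − r: f^{(0)}_{ijk} = b^n_{ijk} and f^{(r)}_{ijk} = q^k u · f^{(r−1)}_{i+1,j,k} + q^k v · f^{(r−1)}_{i,j+1,k} + (1 − q^k u − q^k v) · f^{(r−1)}_{i,j,k+1}. Then for every r with 0 ≤ r ≤ n and all real u, v, γ^n(u,v) = Σ_{i+j+k=n−r} f^{(r)}_{ijk} B^{n−r}_{ijk}(u,v). -/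

import Mathlib

open Finset

/-- The q-integer [r] = 1 + q + ... + q^(r-1). -/
noncomputable def qInt (q : ℝ) (r : ℕ) : ℝ := ∑ s ∈ Finset.range r, q ^ s

/-- The q-factorial [r]!. -/
noncomputable def qFact (q : ℝ) : ℕ → ℝ
  | 0 => 1
  | r + 1 => qInt q (r + 1) * qFact q r

/-- The q-binomial coefficient [i choose j]_q (zero unless i ≥ j ≥ 0). -/
noncomputable def qBinom (q : ℝ) (i j : ℕ) : ℝ :=
  if j ≤ i then qFact q i / (qFact q j * qFact q (i - j)) else 0

/-- The q-binomial coefficient with integer indices, zero unless i ≥ j ≥ 0. -/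
noncomputable def qBinomZ (q : ℝ) (i j : ℤ) : ℝ :=
  if 0 ≤ j ∧ j ≤ i then qFact q i.toNat / (qFact q j.toNat * qFact q (i - j).toNat) else 0

/-- The triangular q-Bernstein polynomial B^n_{ijk}(u,v)
    (meaningful for i + j + k = n). -/
noncomputable def triB (q : ℝ) (n i j k : ℕ) (u v : ℝ) : ℝ :=
  qBinom q n k * (Nat.choose (i + j) i : ℝ) * u ^ i * v ^ j *
    ∏ s ∈ Finset.range k, (1 - q ^ s * u - q ^ s * v)

/-- The triangular q-Bernstein polynomial with integer indices; by convention it is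
    zero whenever any of the indices is negative. -/
noncomputable def triBZ (q : ℝ) (n : ℕ) (i j k : ℤ) (u v : ℝ) : ℝ :=
  if 0 ≤ i ∧ 0 ≤ j ∧ 0 ≤ k then triB q n i.toNat j.toNat k.toNat u v else 0

/-- The classical triangular Bernstein polynomial b^n_{ijk}(u,v). -/
noncomputable def triBern (n i j k : ℕ) (u v : ℝ) : ℝ :=
  (Nat.factorial n : ℝ) /
      ((Nat.factorial i : ℝ) * (Nat.factorial j : ℝ) * (Nat.factorial k : ℝ)) *
    u ^ i * v ^ j * (1 - u - v) ^ k

/-- The set of triples (i, j, k) of nonnegative integers with i + j + k = n. -/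
def simplex (n : ℕ) : Finset (ℕ × ℕ × ℕ) :=
  (Finset.range (n + 1) ×ˢ Finset.range (n + 1) ×ˢ Finset.range (n + 1)).filter
    (fun p => p.1 + p.2.1 + p.2.2 = n)

/-! Each step of the recursion lowers the degree by one through the identity
`B^{m+1}_{ijk} = q^k u B^m_{i-1,j,k} + q^k v B^m_{i,j-1,k}
  + (1 - q^{k-1} u - q^{k-1} v) B^m_{i,j,k-1}`
(terms with a negative index omitted), which is the q-Pascal rule
`[m+1 choose k] = q^k [m choose k] + [m choose k-1]` in `k` combined with the ordinary Pascal rule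
in `(i, j)`. Shifting the summation index in each of the three terms turns
`∑ f^{(r)} B^{n-r}` into `∑ f^{(r+1)} B^{n-r-1}`, and the theorem follows by induction on `r`. -/

lemma mem_simplex {n : ℕ} {p : ℕ × ℕ × ℕ} : p ∈ simplex n ↔ p.1 + p.2.1 + p.2.2 = n := by
  simp only [simplex, mem_filter, mem_product, mem_range]
  omega

lemma sum_simplex_comp_add {M : Type*} [AddCommMonoid M] (F : ℕ × ℕ × ℕ → M) {m d : ℕ}
    {e : ℕ × ℕ × ℕ} (he : e.1 + e.2.1 + e.2.2 = d) :
    ∑ p ∈ simplex m, F (p + e) = ∑ p ∈ simplex (m + d) with e ≤ p, F p := by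
  refine sum_nbij' (· + e) (· - e) ?_ ?_ ?_ ?_ (fun _ _ => rfl)
  all_goals
    intro p hp
    simp only [mem_filter, mem_simplex, Prod.le_def] at hp ⊢
  · simp only [Prod.fst_add, Prod.snd_add]
    omega
  · simp only [Prod.fst_sub, Prod.snd_sub]
    omega
  · simp
  · ext <;> simp only [Prod.fst_add, Prod.snd_add, Prod.fst_sub, Prod.snd_sub] <;> omega

section qBinom

variable {q : ℝ}

lemma qInt_succ_pos (hq : 0 ≤ q) (r : ℕ) : 0 < qInt q (r + 1) := by
  rw [qInt, sum_range_succ']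
  positivity

lemma qFact_pos (hq : 0 ≤ q) (r : ℕ) : 0 < qFact q r := by
  induction r with
  | zero => exact one_pos
  | succ r ih => exact mul_pos (qInt_succ_pos hq r) ih

lemma qInt_add (q : ℝ) (a b : ℕ) : qInt q (a + b) = qInt q a + q ^ a * qInt q b := by
  simp only [qInt, sum_range_add, mul_sum, pow_add]

lemma qBinom_add_left (q : ℝ) (k d : ℕ) :
    qBinom q (k + d) k = qFact q (k + d) / (qFact q k * qFact q d) := by
  simp [qBinom]

lemma qBinom_of_lt {m k : ℕ} (h : m < k) : qBinom q m k = 0 := by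
  simp [qBinom, not_le.mpr h]

lemma qBinom_self (hq : 0 ≤ q) (m : ℕ) : qBinom q m m = 1 := by
  simpa [qFact, (qFact_pos hq m).ne'] using qBinom_add_left q m 0

lemma qBinom_zero_right (hq : 0 ≤ q) (m : ℕ) : qBinom q m 0 = 1 := by
  simpa [qFact, (qFact_pos hq m).ne'] using qBinom_add_left q 0 m

lemma qBinom_succ_succ (hq : 0 ≤ q) (m k : ℕ) :
    qBinom q (m + 1) (k + 1) = q ^ (k + 1) * qBinom q m (k + 1) + qBinom q m k := by
  rcases lt_trichotomy k m with hkm | rfl | hmk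
  · obtain ⟨d, rfl⟩ := Nat.exists_eq_add_of_lt hkm
    rw [show k + d + 1 + 1 = (k + 1) + (d + 1) by ring, show k + d + 1 = (k + 1) + d by ring,
      qBinom_add_left, qBinom_add_left, ← add_assoc, show k + 1 + d = k + (d + 1) by ring,
      qBinom_add_left]
    simp only [qFact]
    rw [show k + (d + 1) + 1 = (k + 1) + (d + 1) by ring, qInt_add]
    have := qFact_pos hq k
    have := qFact_pos hq d
    have := qFact_pos hq (k + (d + 1))
    have := qInt_succ_pos hq k
    have := qInt_succ_pos hq d
    field_simp
    ring
  · simp [qBinom_self hq, qBinom_of_lt]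
  · simp [qBinom_of_lt, hmk, hmk.trans (Nat.lt_add_one k)]

end qBinom

lemma cast_choose_add_succ_succ (i j : ℕ) :
    ((i + 1 + (j + 1)).choose (i + 1) : ℝ) =
      (i + (j + 1)).choose i + (i + 1 + j).choose (i + 1) := by
  rw [show i + 1 + (j + 1) = i + (j + 1) + 1 by ring, Nat.choose_succ_succ',
    show i + (j + 1) = i + 1 + j by ring]
  push_cast
  ring

lemma triB_succ {q : ℝ} (hq : 0 ≤ q) {m i j k : ℕ} (h : i + j + k = m + 1) (u v : ℝ) :
    triB q (m + 1) i j k u v =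
      (if 1 ≤ i then q ^ k * u * triB q m (i - 1) j k u v else 0) +
      (if 1 ≤ j then q ^ k * v * triB q m i (j - 1) k u v else 0) +
      (if 1 ≤ k then (1 - q ^ (k - 1) * u - q ^ (k - 1) * v) * triB q m i j (k - 1) u v
        else 0) := by
  rcases i with _ | i <;> rcases j with _ | j <;> rcases k with _ | k
  all_goals simp only [triB, qBinom_succ_succ hq, qBinom_zero_right hq, prod_range_succ, range_zero,
    prod_empty, Nat.choose_self, Nat.choose_zero_right, Nat.cast_one, add_zero, zero_add, mul_one,
    one_mul, pow_zero, nonpos_iff_eq_zero, one_ne_zero, ↓reduceIte, le_add_iff_nonneg_left, zero_le,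
    add_tsub_cancel_right]
  · omega
  · obtain rfl : k = m := by omega
    simp only [qBinom_of_lt (Nat.lt_add_one _)]
    ring
  · ring
  · ring
  · ring
  · ring
  · rw [cast_choose_add_succ_succ]
    ring
  · rw [cast_choose_add_succ_succ]
    ring

lemma sum_mul_triB_succ {q : ℝ} (hq : 0 ≤ q) (u v : ℝ) {m : ℕ} (g G : ℕ → ℕ → ℕ → ℝ)
    (hG : ∀ i j k, i + j + k = m → G i j k =
      q ^ k * u * g (i + 1) j k + q ^ k * v * g i (j + 1) k +
        (1 - q ^ k * u - q ^ k * v) * g i j (k + 1)) :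
    ∑ p ∈ simplex (m + 1), g p.1 p.2.1 p.2.2 * triB q (m + 1) p.1 p.2.1 p.2.2 u v =
      ∑ p ∈ simplex m, G p.1 p.2.1 p.2.2 * triB q m p.1 p.2.1 p.2.2 u v := by
  let F₁ : ℕ × ℕ × ℕ → ℝ := fun p =>
    q ^ p.2.2 * u * g p.1 p.2.1 p.2.2 * triB q m (p.1 - 1) p.2.1 p.2.2 u v
  let F₂ : ℕ × ℕ × ℕ → ℝ := fun p =>
    q ^ p.2.2 * v * g p.1 p.2.1 p.2.2 * triB q m p.1 (p.2.1 - 1) p.2.2 u v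
  let F₃ : ℕ × ℕ × ℕ → ℝ := fun p =>
    (1 - q ^ (p.2.2 - 1) * u - q ^ (p.2.2 - 1) * v) * g p.1 p.2.1 p.2.2 *
      triB q m p.1 p.2.1 (p.2.2 - 1) u v
  calc ∑ p ∈ simplex (m + 1), g p.1 p.2.1 p.2.2 * triB q (m + 1) p.1 p.2.1 p.2.2 u v
      = ∑ p ∈ simplex (m + 1), ((if (1, 0, 0) ≤ p then F₁ p else 0) +
          (if (0, 1, 0) ≤ p then F₂ p else 0) + (if (0, 0, 1) ≤ p then F₃ p else 0)) := by
        refine sum_congr rfl fun p hp => ?_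
        rw [triB_succ hq (mem_simplex.1 hp)]
        simp only [F₁, F₂, F₃, Prod.le_def, zero_le, and_true, true_and]
        split_ifs <;> ring
    _ = ∑ p ∈ simplex m, (F₁ (p + (1, 0, 0)) + F₂ (p + (0, 1, 0)) + F₃ (p + (0, 0, 1))) := by
        rw [sum_add_distrib, sum_add_distrib, sum_add_distrib, sum_add_distrib,
          sum_simplex_comp_add F₁ (d := 1) rfl, sum_simplex_comp_add F₂ (d := 1) rfl,
          sum_simplex_comp_add F₃ (d := 1) rfl, sum_filter, sum_filter, sum_filter]
    _ = ∑ p ∈ simplex m, G p.1 p.2.1 p.2.2 * triB q m p.1 p.2.1 p.2.2 u v := by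
        refine sum_congr rfl fun p hp => ?_
        rw [hG _ _ _ (mem_simplex.1 hp)]
        simp only [F₁, F₂, F₃, Prod.fst_add, Prod.snd_add, add_zero, add_tsub_cancel_right]
        ring

theorem stmt3_general (q : ℝ) (hq0 : 0 < q) (n : ℕ)
    (b : ℕ → ℕ → ℕ → ℝ) (u v : ℝ)
    (f : ℕ → ℕ → ℕ → ℕ → ℝ)
    (hf0 : ∀ i j k, i + j + k = n → f 0 i j k = b i j k)
    (hfr : ∀ r i j k, r < n → i + j + k = n - (r + 1) →
      f (r + 1) i j k =
        q ^ k * u * f r (i + 1) j k + q ^ k * v * f r i (j + 1) k +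
          (1 - q ^ k * u - q ^ k * v) * f r i j (k + 1)) :
    ∀ r ≤ n,
      ∑ p ∈ simplex n, b p.1 p.2.1 p.2.2 * triB q n p.1 p.2.1 p.2.2 u v =
        ∑ p ∈ simplex (n - r), f r p.1 p.2.1 p.2.2 * triB q (n - r) p.1 p.2.1 p.2.2 u v := by
  intro r hr
  induction r with
  | zero =>
    rw [Nat.sub_zero]
    exact sum_congr rfl fun p hp => by rw [hf0 _ _ _ (mem_simplex.1 hp)]
  | succ r ih =>
    have hrn : r < n := hr
    rw [ih hrn.le, show n - r = n - (r + 1) + 1 by omega]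
    exact sum_mul_triB_succ hq0.le u v (f r) (f (r + 1)) fun i j k => hfr r i j k hrn

/-- intermediate quantities of the de Casteljau type algorithm. -/
theorem stmt3 (q : ℝ) (hq0 : 0 < q) (hq1 : q ≤ 1) (n : ℕ)
    (b : ℕ → ℕ → ℕ → ℝ) (u v : ℝ)
    (f : ℕ → ℕ → ℕ → ℕ → ℝ)
    (hf0 : ∀ i j k, i + j + k = n → f 0 i j k = b i j k)
    (hfr : ∀ r i j k, r < n → i + j + k = n - (r + 1) →
      f (r + 1) i j k =
        q ^ k * u * f r (i + 1) j k + q ^ k * v * f r i (j + 1) k +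
          (1 - q ^ k * u - q ^ k * v) * f r i j (k + 1)) :
    ∀ r ≤ n,
      ∑ p ∈ simplex n, b p.1 p.2.1 p.2.2 * triB q n p.1 p.2.1 p.2.2 u v =
        ∑ p ∈ simplex (n - r), f r p.1 p.2.1 p.2.2 * triB q (n - r) p.1 p.2.1 p.2.2 u v :=
  stmt3_general q hq0 n b u v f hf0 hfr
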